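/- arXiv:2604.18945 — 2 statements merged into one kernel-verified Lean document; each statement's English description precedes it below -/
import Mathlib

section
/- Let ℓ > 0, τ > 0, and let x₀, N, x be real numbers. Then x = exp(−τℓ)·x₀ + τ·((1 − exp(−τℓ))/(τℓ))·N holds if and only if (τℓ/(exp(τℓ) − 1))·((x − x₀)/τ) + ℓ·x = N. -/
/-- Scalar equivalence between the first-order ETD scheme
`x = e^{−τℓ}x₀ + τ·φ₁(−τℓ)·N` with `φ₁(z) = (e^z − 1)/z`, and its
backward Euler-type reformulation `Q(τℓ)·(x − x₀)/τ + ℓ·x = N`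
with `Q(z) = z/(e^z − 1)`. -/
theorem stmt_1 (ℓ τ x₀ N x : ℝ) (hℓ : 0 < ℓ) (hτ : 0 < τ) :
    x = Real.exp (-(τ * ℓ)) * x₀ + τ * ((1 - Real.exp (-(τ * ℓ))) / (τ * ℓ)) * N ↔
    (τ * ℓ / (Real.exp (τ * ℓ) - 1)) * ((x - x₀) / τ) + ℓ * x = N := by
  have hE : 1 < Real.exp (τ * ℓ) := by
    rw [show (1:ℝ) = Real.exp 0 from (Real.exp_zero).symm]
    exact Real.exp_lt_exp.mpr (by positivity)
  set E := Real.exp (τ * ℓ) with hEdef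
  have hEpos : 0 < E := lt_trans one_pos hE
  have hEne : E - 1 ≠ 0 := sub_ne_zero.mpr (ne_of_gt hE)
  have hneg : Real.exp (-(τ * ℓ)) = E⁻¹ := by
    rw [Real.exp_neg]
  rw [hneg]
  constructor
  · intro h
    field_simp at h ⊢
    nlinarith [h, hEpos, hτ.ne', hℓ.ne']
  · intro h
    field_simp at h ⊢
    nlinarith [h, hEpos]
end

section
/- Let A, b, C, S, κ, η ∈ ℝ with C > 0, S ≥ 0, η > 0 and κ ≥ 0. Define f(ξ) := −A·ξ + b·ξ² − C·ξ³ + S. Assume f(η) ≤ 0 and κ ≥ A − 2b·ξ + 3C·ξ² for every ξ ∈ [0, η]. Then |κ·ξ + f(ξ)| ≤ κ·η for all ξ ∈ [0, η]. -/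
/-! The map `g(ξ) = κξ + f(ξ)` has derivative `κ - (A - 2bξ + 3Cξ²) ≥ 0` on `[0, η]`, so it is
monotone there. Hence `S = g 0 ≤ g ξ ≤ g η = κη + f(η) ≤ κη`, and since `S ≥ 0` the value `g ξ`
is nonnegative, so it equals its absolute value. -/

open Set

lemma abs_le_of_monotoneOn_Icc {α β : Type*} [Preorder α] [AddCommGroup β] [LinearOrder β]
    [IsOrderedAddMonoid β] {g : α → β} {a b : α} {c : β} (hg : MonotoneOn g (Icc a b))
    (ha : 0 ≤ g a) (hb : g b ≤ c) : ∀ x ∈ Icc a b, |g x| ≤ c := by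
  intro x hx
  have hab : a ≤ b := hx.1.trans hx.2
  have hgx : 0 ≤ g x := ha.trans (hg (left_mem_Icc.2 hab) hx hx.1)
  rw [abs_of_nonneg hgx]
  exact (hg hx (right_mem_Icc.2 hab) hx.2).trans hb

lemma hasDerivAt_cubic (κ A b C S x : ℝ) :
    HasDerivAt (fun ξ => κ * ξ + (-A * ξ + b * ξ ^ 2 - C * ξ ^ 3 + S))
      (κ - (A - 2 * b * x + 3 * C * x ^ 2)) x := by
  have h := ((hasDerivAt_id x).const_mul κ).add
    (((((hasDerivAt_id x).const_mul (-A)).add ((hasDerivAt_pow 2 x).const_mul b)).sub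
      ((hasDerivAt_pow 3 x).const_mul C)).add_const S)
  exact h.congr_deriv (by norm_num; ring)

lemma monotoneOn_cubic {D : Set ℝ} (hD : Convex ℝ D) {κ A b C S : ℝ}
    (hκ : ∀ ξ ∈ D, A - 2 * b * ξ + 3 * C * ξ ^ 2 ≤ κ) :
    MonotoneOn (fun ξ => κ * ξ + (-A * ξ + b * ξ ^ 2 - C * ξ ^ 3 + S)) D :=
  monotoneOn_of_hasDerivWithinAt_nonneg hD
    (fun x _ => (hasDerivAt_cubic κ A b C S x).continuousAt.continuousWithinAt)
    (fun x _ => (hasDerivAt_cubic κ A b C S x).hasDerivWithinAt)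
    (fun x hx => sub_nonneg.2 (hκ x (interior_subset hx)))

theorem stmt_14_general (A b C S κ η : ℝ) (hS : 0 ≤ S)
    (hfη : -A * η + b * η ^ 2 - C * η ^ 3 + S ≤ 0)
    (hκ : ∀ ξ ∈ Set.Icc (0 : ℝ) η, A - 2 * b * ξ + 3 * C * ξ ^ 2 ≤ κ) :
    ∀ ξ ∈ Set.Icc (0 : ℝ) η,
      |κ * ξ + (-A * ξ + b * ξ ^ 2 - C * ξ ^ 3 + S)| ≤ κ * η :=
  abs_le_of_monotoneOn_Icc (monotoneOn_cubic (convex_Icc 0 η) hκ) (by simpa using hS)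
    (by linarith)

/-- Uniform bound `|κξ + f(ξ)| ≤ κη` on `[0, η]` for
`f(ξ) = −Aξ + bξ² − Cξ³ + S`, provided `f(η) ≤ 0` and
`κ ≥ A − 2bξ + 3Cξ²` on `[0, η]`. -/
theorem stmt_14 (A b C S κ η : ℝ) (hC : 0 < C) (hS : 0 ≤ S) (hη : 0 < η)
    (hκ0 : 0 ≤ κ)
    (hfη : -A * η + b * η ^ 2 - C * η ^ 3 + S ≤ 0)
    (hκ : ∀ ξ ∈ Set.Icc (0 : ℝ) η, A - 2 * b * ξ + 3 * C * ξ ^ 2 ≤ κ) :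
    ∀ ξ ∈ Set.Icc (0 : ℝ) η,
      |κ * ξ + (-A * ξ + b * ξ ^ 2 - C * ξ ^ 3 + S)| ≤ κ * η :=
  stmt_14_general A b C S κ η hS hfη hκ
end
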